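/- arXiv:2211.17269 — 2 statements merged into one kernel-verified Lean document; each statement's English description precedes it below -/
import Mathlib

section
/- For every t ∈ ℝ and every τ ∈ ℂ, the function M_t admits the power-series expansion M_t(τ) = Σ_{γ=0}^∞ α_{2γ} τ^{2γ}, where α_{2γ} = (1/(2γ)!) ∫₀^∞ exp(−t x²) G(x) x^{2γ} dx, and this series converges for all τ ∈ ℂ. -/
/-!
Expanding `cosh (τ x) = ∑ (τ x) ^ (2γ) / (2γ)!` and integrating termwise is legitimate as soon
as `f x * exp (2 ‖τ‖ |x|)` is integrable, since the `γ`-th term is at most that function times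
`4⁻ᵞ`. For `f x = exp (-t x²) * G x` this holds for every `t` and `τ`: termwise,
`|G x| ≤ C exp (9x) exp (-(π/2) exp (4x))` on `x ≥ 0`, and the double exponential beats
`exp (a x² + b x)` for all `a`, `b`.
-/

open MeasureTheory

/-- `G x = Σ_{m=1}^∞ (2π²m⁴ e^{9x} − 3πm² e^{5x}) e^{−πm² e^{4x}}`. -/
noncomputable def G (x : ℝ) : ℝ :=
  ∑' m : ℕ, (2 * Real.pi ^ 2 * ((m : ℝ) + 1) ^ 4 * Real.exp (9 * x)
      - 3 * Real.pi * ((m : ℝ) + 1) ^ 2 * Real.exp (5 * x))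
    * Real.exp (-(Real.pi * ((m : ℝ) + 1) ^ 2 * Real.exp (4 * x)))

/-- `M t τ = ∫₀^∞ e^{−t x²} G x cosh (τ x) dx`. -/
noncomputable def M (t : ℝ) (τ : ℂ) : ℂ :=
  ∫ x in Set.Ioi (0 : ℝ),
    ((Real.exp (-(t * x ^ 2)) * G x : ℝ) : ℂ) * Complex.cosh (τ * (x : ℂ))

/-- `Ξ t λ = ∫₀^∞ e^{−t x²} G x cos (λ x) dx`. -/
noncomputable def Xi (t : ℝ) (l : ℂ) : ℂ :=
  ∫ x in Set.Ioi (0 : ℝ),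
    ((Real.exp (-(t * x ^ 2)) * G x : ℝ) : ℂ) * Complex.cos (l * (x : ℂ))

/-- `α t γ = (1/(2γ)!) ∫₀^∞ e^{−t x²} G x x^{2γ} dx`. -/
noncomputable def α (t : ℝ) (γ : ℕ) : ℝ :=
  (1 / (Nat.factorial (2 * γ) : ℝ)) *
    ∫ x in Set.Ioi (0 : ℝ), Real.exp (-(t * x ^ 2)) * G x * x ^ (2 * γ)

open Real Set Filter
open scoped Nat

lemma pow_div_factorial_le_exp_two_mul {y : ℝ} (hy : 0 ≤ y) (n : ℕ) :
    y ^ n / n ! ≤ exp (2 * y) * (1 / 2) ^ n := by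
  have h := pow_div_factorial_le_exp (2 * y) (by positivity) n
  calc y ^ n / n ! = (2 * y) ^ n / n ! * (1 / 2) ^ n := by
        rw [mul_pow, mul_div_assoc, mul_comm, ← mul_assoc, ← mul_pow]; norm_num
    _ ≤ exp (2 * y) * (1 / 2) ^ n := by gcongr

lemma norm_mul_cosh_term_le (a : ℝ) (τ : ℂ) (x : ℝ) (γ : ℕ) :
    ‖(a : ℂ) * ((τ * x) ^ (2 * γ) / (2 * γ)!)‖ ≤ ‖a * exp (2 * ‖τ‖ * |x|)‖ * (1 / 4) ^ γ := by
  have h := pow_div_factorial_le_exp_two_mul (by positivity : 0 ≤ ‖τ‖ * |x|) (2 * γ)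
  rw [show ((1 : ℝ) / 2) ^ (2 * γ) = (1 / 4) ^ γ by rw [pow_mul]; norm_num, ← mul_assoc] at h
  simpa only [norm_mul, norm_div, norm_pow, Complex.norm_real, Complex.norm_natCast,
    Real.norm_eq_abs, abs_exp, mul_assoc] using mul_le_mul_of_nonneg_left h (abs_nonneg a)

theorem hasSum_integral_mul_cosh {μ : Measure ℝ} {f : ℝ → ℝ} {τ : ℂ}
    (hfm : AEStronglyMeasurable f μ) (hf : Integrable (fun x => f x * exp (2 * ‖τ‖ * |x|)) μ) :
    HasSum (fun γ : ℕ => ((1 / ((2 * γ)! : ℝ) * ∫ x, f x * x ^ (2 * γ) ∂μ : ℝ) : ℂ) * τ ^ (2 * γ))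
      (∫ x, (f x : ℂ) * Complex.cosh (τ * x) ∂μ) := by
  set F : ℕ → ℝ → ℂ := fun γ x => (f x : ℂ) * ((τ * x) ^ (2 * γ) / (2 * γ)!)
  have hF_le (γ : ℕ) (x : ℝ) : ‖F γ x‖ ≤ ‖f x * exp (2 * ‖τ‖ * |x|)‖ * (1 / 4) ^ γ :=
    norm_mul_cosh_term_le _ _ _ _
  have hF_int (γ : ℕ) : Integrable (F γ) μ :=
    (hf.norm.mul_const _).mono' ((Complex.continuous_ofReal.comp_aestronglyMeasurable hfm).mul
      (by fun_prop)) (ae_of_all _ (hF_le γ))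
  have hF_sum : Summable fun γ => ∫ x, ‖F γ x‖ ∂μ :=
    .of_nonneg_of_le (fun γ => integral_nonneg fun _ => norm_nonneg _)
      (fun γ => (integral_mono (hF_int γ).norm (hf.norm.mul_const _) (hF_le γ)).trans_eq
        (integral_mul_const _ _))
      ((summable_geometric_of_lt_one (by norm_num) (by norm_num)).mul_left _)
  have hF_integral (γ : ℕ) : ∫ x, F γ x ∂μ =
      ((1 / ((2 * γ)! : ℝ) * ∫ x, f x * x ^ (2 * γ) ∂μ : ℝ) : ℂ) * τ ^ (2 * γ) := by
    have hF (x : ℝ) : F γ x = ((f x * x ^ (2 * γ) : ℝ) : ℂ) * (τ ^ (2 * γ) / (2 * γ)!) := by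
      simp only [F]; push_cast; ring
    simp only [hF, integral_mul_const, integral_complex_ofReal]
    push_cast; ring
  have hF_tsum (x : ℝ) : ∑' γ, F γ x = (f x : ℂ) * Complex.cosh (τ * x) :=
    ((Complex.hasSum_cosh _).mul_left _).tsum_eq
  simpa only [hF_integral, hF_tsum] using hasSum_integral_of_summable_integral_norm hF_int hF_sum

noncomputable def GTerm (m : ℕ) (x : ℝ) : ℝ :=
  (2 * π ^ 2 * ((m : ℝ) + 1) ^ 4 * exp (9 * x) - 3 * π * ((m : ℝ) + 1) ^ 2 * exp (5 * x))
    * exp (-(π * ((m : ℝ) + 1) ^ 2 * exp (4 * x)))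

lemma summable_succ_pow_four_mul_exp_neg :
    Summable fun m : ℕ => ((m : ℝ) + 1) ^ 4 * exp (-((m : ℝ) + 1)) := by
  simpa using (summable_nat_add_iff 1).2 (summable_pow_mul_exp_neg_nat_mul 4 one_pos)

lemma abs_GTerm_le {x : ℝ} (hx : 0 ≤ x) (m : ℕ) :
    |GTerm m x| ≤ (2 * π ^ 2 + 3 * π) * (exp (9 * x) * exp (-(π / 2 * exp (4 * x))))
      * (((m : ℝ) + 1) ^ 4 * exp (-((m : ℝ) + 1))) := by
  set n : ℝ := m + 1
  have hn : 1 ≤ n := le_add_of_nonneg_left m.cast_nonneg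
  have hE : 1 ≤ exp (4 * x) := one_le_exp (by linarith)
  have h_coeff : |2 * π ^ 2 * n ^ 4 * exp (9 * x) - 3 * π * n ^ 2 * exp (5 * x)|
      ≤ (2 * π ^ 2 + 3 * π) * n ^ 4 * exp (9 * x) := by
    have hn2 : n ^ 2 ≤ n ^ 4 := pow_le_pow_right₀ hn (by norm_num)
    have h59 : exp (5 * x) ≤ exp (9 * x) := exp_le_exp.2 (by linarith)
    have hB : 3 * π * n ^ 2 * exp (5 * x) ≤ 3 * π * n ^ 4 * exp (9 * x) := by gcongr
    have hA : 0 ≤ 2 * π ^ 2 * n ^ 4 * exp (9 * x) := by positivity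
    have hB0 : 0 ≤ 3 * π * n ^ 2 * exp (5 * x) := by positivity
    rw [abs_sub_le_iff]
    constructor <;> linarith
  -- `(n² - 1)(E - 1) ≥ 0` splits the Gaussian factor into one in `E = exp (4x)` and one in `n`.
  have h_split : exp (-(π * n ^ 2 * exp (4 * x))) ≤ exp (-(π / 2 * exp (4 * x))) * exp (-n) := by
    rw [← exp_add, exp_le_exp]
    nlinarith [mul_nonneg (sub_nonneg.2 (one_le_pow₀ hn : (1 : ℝ) ≤ n ^ 2)) (sub_nonneg.2 hE),
      pi_gt_three, mul_le_mul_of_nonneg_left hn (by linarith : (0 : ℝ) ≤ n)]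
  calc |GTerm m x| = |2 * π ^ 2 * n ^ 4 * exp (9 * x) - 3 * π * n ^ 2 * exp (5 * x)|
        * exp (-(π * n ^ 2 * exp (4 * x))) := by rw [GTerm, abs_mul, abs_exp]
    _ ≤ (2 * π ^ 2 + 3 * π) * n ^ 4 * exp (9 * x)
        * (exp (-(π / 2 * exp (4 * x))) * exp (-n)) := by gcongr
    _ = _ := by ring

lemma hasSum_GTerm {x : ℝ} (hx : 0 ≤ x) : HasSum (fun m => GTerm m x) (G x) :=
  (Summable.of_norm_bounded (summable_succ_pow_four_mul_exp_neg.mul_left _)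
    (abs_GTerm_le hx)).hasSum

lemma exists_abs_G_le : ∃ C, 0 ≤ C ∧
    ∀ x, 0 ≤ x → |G x| ≤ C * (exp (9 * x) * exp (-(π / 2 * exp (4 * x)))) := by
  set S := ∑' m : ℕ, ((m : ℝ) + 1) ^ 4 * exp (-((m : ℝ) + 1))
  refine ⟨(2 * π ^ 2 + 3 * π) * S, mul_nonneg (by positivity) (tsum_nonneg fun m => by positivity),
    fun x hx => ?_⟩
  calc |G x| = ‖∑' m, GTerm m x‖ := rfl
    _ ≤ (2 * π ^ 2 + 3 * π) * (exp (9 * x) * exp (-(π / 2 * exp (4 * x)))) * S :=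
      tsum_of_norm_bounded (summable_succ_pow_four_mul_exp_neg.hasSum.mul_left _) (abs_GTerm_le hx)
    _ = _ := by ring

lemma aestronglyMeasurable_G : AEStronglyMeasurable G (volume.restrict (Ioi 0)) :=
  aestronglyMeasurable_of_tendsto_ae atTop (f := fun n x => ∑ m ∈ Finset.range n, GTerm m x)
    (fun n => (Finset.measurable_sum _ fun m _ => by unfold GTerm; fun_prop).aestronglyMeasurable)
    ((ae_restrict_mem measurableSet_Ioi).mono fun x hx =>
      (hasSum_GTerm (le_of_lt hx)).tendsto_sum_nat)

lemma exists_forall_quadratic_le_cube_add (a b : ℝ) :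
    ∃ K, ∀ x, 0 ≤ x → a * x ^ 2 + b * x ≤ x ^ 3 + K := by
  set B := |a| + |b| + 1
  refine ⟨B ^ 3, fun x hx => ?_⟩
  have hB : 1 ≤ B := by simp only [B]; linarith [abs_nonneg a, abs_nonneg b]
  have habs : a * x ^ 2 + b * x ≤ |a| * x ^ 2 + |b| * x := by
    gcongr <;> exact le_abs_self _
  rcases le_total x B with hxB | hBx
  · have : |a| * x ^ 2 + |b| * x ≤ B ^ 3 := by
      calc |a| * x ^ 2 + |b| * x ≤ |a| * B ^ 2 + |b| * (B * B) := by gcongr; nlinarith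
        _ ≤ B * B ^ 2 := by nlinarith [abs_nonneg a, abs_nonneg b]
        _ = B ^ 3 := by ring
    nlinarith [pow_nonneg hx 3]
  · have : |a| * x ^ 2 + |b| * x ≤ x ^ 3 := by
      calc |a| * x ^ 2 + |b| * x ≤ |a| * x ^ 2 + |b| * (x * x) := by gcongr; nlinarith
        _ ≤ B * x ^ 2 := by nlinarith [abs_nonneg a, abs_nonneg b]
        _ ≤ x * x ^ 2 := by gcongr
        _ = x ^ 3 := by ring
    nlinarith [pow_nonneg (by linarith : (0 : ℝ) ≤ B) 3]

lemma cube_le_pi_div_two_mul_exp {x : ℝ} (hx : 0 ≤ x) : x ^ 3 ≤ π / 2 * exp (4 * x) := by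
  have h := pow_div_factorial_le_exp (4 * x) (by positivity) 3
  norm_num [Nat.factorial] at h
  nlinarith [pi_gt_three, exp_pos (4 * x), pow_nonneg hx 3]

lemma integrable_exp_mul_G_mul_exp (t c : ℝ) :
    Integrable (fun x => exp (-(t * x ^ 2)) * G x * exp (c * |x|)) (volume.restrict (Ioi 0)) := by
  obtain ⟨C, hC, hG⟩ := exists_abs_G_le
  obtain ⟨K, hK⟩ := exists_forall_quadratic_le_cube_add (-t) (c + 10)
  refine ((exp_neg_integrableOn_Ioi 0 one_pos).const_mul (C * exp K)).mono'
    (((by fun_prop : Continuous fun x : ℝ => exp (-(t * x ^ 2))).aestronglyMeasurable.mul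
      aestronglyMeasurable_G).mul (by fun_prop)) ?_
  filter_upwards [ae_restrict_mem measurableSet_Ioi] with x hx
  have hx0 : 0 ≤ x := le_of_lt hx
  have h_exponent : -(t * x ^ 2) + 9 * x + -(π / 2 * exp (4 * x)) + c * x ≤ K + -1 * x := by
    linarith [hK x hx0, cube_le_pi_div_two_mul_exp hx0]
  rw [norm_mul, norm_mul, norm_of_nonneg (exp_pos _).le, norm_of_nonneg (exp_pos _).le,
    Real.norm_eq_abs, abs_of_nonneg hx0]
  calc exp (-(t * x ^ 2)) * |G x| * exp (c * x)
      ≤ exp (-(t * x ^ 2)) * (C * (exp (9 * x) * exp (-(π / 2 * exp (4 * x))))) * exp (c * x) := by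
        gcongr; exact hG x hx0
    _ = C * exp (-(t * x ^ 2) + 9 * x + -(π / 2 * exp (4 * x)) + c * x) := by
        simp only [exp_add]; ring
    _ ≤ C * exp (K + -1 * x) := by gcongr
    _ = C * exp K * exp (-1 * x) := by rw [exp_add]; ring

/-- the power-series expansion of `M t` with coefficients `α t γ`,
converging (as a sum) for every `τ ∈ ℂ`. -/
theorem M_hasSum_powerSeries (t : ℝ) (τ : ℂ) :
    HasSum (fun γ : ℕ => ((α t γ : ℝ) : ℂ) * τ ^ (2 * γ)) (M t τ) :=
  hasSum_integral_mul_cosh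
    ((by fun_prop : Continuous fun x : ℝ => exp (-(t * x ^ 2))).aestronglyMeasurable.mul
      aestronglyMeasurable_G)
    (integrable_exp_mul_G_mul_exp t _)
end

section
/- For every real x > 0, G(x) > 0, where G(x) = Σ_{m=1}^∞ (2π²m⁴·exp(9x) − 3πm²·exp(5x))·exp(−πm²·exp(4x)). -/
open MeasureTheory

/-- `G x > 0` for every real `x > 0`. -/
theorem G_pos (x : ℝ) (hx : 0 < x) : 0 < G x := by
  set f : ℕ → ℝ := fun m => (2 * Real.pi ^ 2 * ((m : ℝ) + 1) ^ 4 * Real.exp (9 * x)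
      - 3 * Real.pi * ((m : ℝ) + 1) ^ 2 * Real.exp (5 * x))
    * Real.exp (-(Real.pi * ((m : ℝ) + 1) ^ 2 * Real.exp (4 * x))) with hf
  have hπ : (3 : ℝ) < Real.pi := Real.pi_gt_three
  have hpos : ∀ m : ℕ, 0 < f m := by
    intro m
    have hm : (1:ℝ) ≤ (m:ℝ) + 1 := by
      have := Nat.cast_nonneg (α := ℝ) m; linarith
    have he : Real.exp (5 * x) ≤ Real.exp (9 * x) := by
      apply Real.exp_le_exp.2; linarith
    have hep : 0 < Real.exp (5 * x) := Real.exp_pos _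
    apply mul_pos _ (Real.exp_pos _)
    have hm2 : (1:ℝ) ≤ ((m:ℝ)+1)^2 := by nlinarith
    have h2 : ((m:ℝ)+1)^2 ≤ ((m:ℝ)+1)^4 := by nlinarith [sq_nonneg ((m:ℝ)+1)]
    have key : 3 * Real.pi * ((m:ℝ)+1)^2 * Real.exp (5*x)
        < 2 * Real.pi^2 * ((m:ℝ)+1)^2 * Real.exp (5*x) := by
      have h6 : 3 * Real.pi < 2 * Real.pi ^ 2 := by nlinarith
      have hq : (0:ℝ) < ((m:ℝ)+1)^2 := by positivity
      nlinarith [mul_pos hq hep]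
    have key2 : 2 * Real.pi^2 * ((m:ℝ)+1)^2 * Real.exp (5*x)
        ≤ 2 * Real.pi^2 * ((m:ℝ)+1)^4 * Real.exp (9*x) := by
      have hπ0 : (0:ℝ) < Real.pi := by linarith
      nlinarith [mul_le_mul h2 he hep.le (by positivity : (0:ℝ) ≤ ((m:ℝ)+1)^4)]
    linarith
  have hsum : Summable f := by
    have hr : ‖Real.exp (-1)‖ < 1 := by
      rw [Real.norm_eq_abs, abs_of_pos (Real.exp_pos _)]
      exact Real.exp_lt_one_iff.2 (by norm_num)
    have h1 : Summable (fun n : ℕ => (n : ℝ) ^ 4 * Real.exp (-1) ^ n) :=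
      summable_pow_mul_geometric_of_norm_lt_one 4 hr
    have h2 : Summable (fun m : ℕ => ((m : ℝ) + 1) ^ 4 * Real.exp (-1) ^ (m + 1)) := by
      have := (summable_nat_add_iff 1).2 h1
      simpa using this
    have hg : Summable (fun m : ℕ => (2 * Real.pi ^ 2 * Real.exp (9 * x)) *
        (((m : ℝ) + 1) ^ 4 * Real.exp (-1) ^ (m + 1))) := h2.mul_left _
    have hle : ∀ m : ℕ, f m ≤ (2 * Real.pi ^ 2 * Real.exp (9 * x)) *
        (((m : ℝ) + 1) ^ 4 * Real.exp (-1) ^ (m + 1)) := by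
      intro m
      have hm : (1:ℝ) ≤ (m:ℝ) + 1 := by
        have := Nat.cast_nonneg (α := ℝ) m; linarith
      have hbr : (2 * Real.pi ^ 2 * ((m : ℝ) + 1) ^ 4 * Real.exp (9 * x)
          - 3 * Real.pi * ((m : ℝ) + 1) ^ 2 * Real.exp (5 * x))
          ≤ 2 * Real.pi ^ 2 * ((m : ℝ) + 1) ^ 4 * Real.exp (9 * x) := by
        have h0 : (0:ℝ) ≤ 3 * Real.pi * ((m:ℝ)+1) ^ 2 * Real.exp (5 * x) := by
          have hπ0 : (0:ℝ) < Real.pi := by linarith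
          positivity
        linarith
      have hexp : Real.exp (-(Real.pi * ((m : ℝ) + 1) ^ 2 * Real.exp (4 * x)))
          ≤ Real.exp (-1) ^ (m + 1) := by
        rw [← Real.exp_nat_mul]
        apply Real.exp_le_exp.2
        have hge : (1 : ℝ) ≤ Real.exp (4 * x) := Real.one_le_exp (by linarith)
        have : ((m:ℝ)+1) ≤ Real.pi * ((m : ℝ) + 1) ^ 2 * Real.exp (4 * x) := by
          have hπ0 : (0:ℝ) < Real.pi := by linarith
          have ha : ((m:ℝ)+1) ≤ ((m:ℝ)+1)^2 := by nlinarith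
          have hb : ((m:ℝ)+1)^2 ≤ Real.pi * ((m:ℝ)+1)^2 := by nlinarith [sq_nonneg ((m:ℝ)+1)]
          have hc : (0:ℝ) ≤ Real.pi * ((m:ℝ)+1)^2 * (Real.exp (4*x) - 1) :=
            mul_nonneg (by positivity) (by linarith)
          nlinarith
        push_cast
        linarith
      calc f m ≤ (2 * Real.pi ^ 2 * ((m : ℝ) + 1) ^ 4 * Real.exp (9 * x)) *
            Real.exp (-1) ^ (m + 1) := by
            apply mul_le_mul hbr hexp (Real.exp_pos _).le
            positivity
        _ = (2 * Real.pi ^ 2 * Real.exp (9 * x)) *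
            (((m : ℝ) + 1) ^ 4 * Real.exp (-1) ^ (m + 1)) := by ring
    exact Summable.of_nonneg_of_le (fun m => (hpos m).le) hle hg
  exact Summable.tsum_pos hsum (fun m => (hpos m).le) 0 (hpos 0)
end
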